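/- Let U and A be Hopf ∗-algebras over ℂ with antipodes S, and let ⟨·,·⟩ be a duality pairing of Hopf ∗-algebras between U and A; define the left action of U on A by a.φ = Σ φ₍₁₎ ⟨a, φ₍₂₎⟩. Let 𝒥 ⊆ U be a left ideal of U satisfying S(𝒥)^∗ ⊆ 𝒥, where S(𝒥)^∗ = { S(x)^∗ : x ∈ 𝒥 }. Then the invariant subspace A^𝒥 = { φ ∈ A : x.φ = 0 for all x ∈ 𝒥 } is closed under the ∗-operation of A: if φ ∈ A^𝒥 then φ^∗ ∈ A^𝒥. (This is the claim that under condition (2.6) the subalgebra A_q(G/K) is a ∗-subalgebra of A_q(G).) -/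

import Mathlib

open TensorProduct

noncomputable section

variable {U A : Type*} [Ring U] [Ring A] [HopfAlgebra ℂ U] [HopfAlgebra ℂ A]
  [StarRing U] [StarModule ℂ U] [StarRing A] [StarModule ℂ A]

/-- The extension of a bilinear pairing `⟨·,·⟩ : U × A → ℂ` to tensor squares:
`⟨a ⊗ b, φ ⊗ ψ⟩ = ⟨a, φ⟩ ⟨b, ψ⟩`. -/
def pairTensor (p : U →ₗ[ℂ] Module.Dual ℂ A) :
    U ⊗[ℂ] U →ₗ[ℂ] Module.Dual ℂ (A ⊗[ℂ] A) :=
  (TensorProduct.dualDistrib ℂ A A).comp (TensorProduct.map p p)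

/-- The left action of `U` on `A` induced by a pairing `p`, as a linear map on the tensor
product: `a ⊗ φ ↦ a.φ = Σ φ₍₁₎ ⟨a, φ₍₂₎⟩`. -/
def actM (p : U →ₗ[ℂ] Module.Dual ℂ A) : U ⊗[ℂ] A →ₗ[ℂ] A :=
  (TensorProduct.rid ℂ A).toLinearMap
    ∘ₗ LinearMap.lTensor A (TensorProduct.lift p)
    ∘ₗ (TensorProduct.leftComm ℂ U A A).toLinearMap
    ∘ₗ LinearMap.lTensor U (Coalgebra.comul (R := ℂ) (A := A))

/-! In a Hopf ∗-algebra the map `T = ∗ ∘ S ∘ ∗` satisfies `Σ T(x₍₂₎) x₍₁₎ = ε(x) 1`, so `S ∘ T` is a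
right convolution inverse of `S`; since `id` is a left one, `S ∘ T = id`, i.e. `S(S(ψ)^∗) = ψ^∗`.
Together with the ∗-compatibility of the pairing this gives `⟨x, ψ^∗⟩ = conj ⟨S(x)^∗, ψ⟩`, hence
`x.φ^∗ = (S(x)^∗.φ)^∗`, which vanishes for `x ∈ 𝒥` because `S(x)^∗ ∈ 𝒥`. -/

open Coalgebra HopfAlgebra WithConv

section HopfStar

variable {R B : Type*} [CommSemiring R] [StarRing R] [Semiring B] [HopfAlgebra R B]
  [StarRing B]

variable (R B) in
/-- `Δ(x^∗) = (∗ ⊗ ∗)(Δ x)` is quantified over all finite-sum presentations of `Δ x`, since the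
conjugate-linear `∗ ⊗ ∗` is not a map on `B ⊗[R] B`. -/
structure IsHopfStarAlgebra : Prop where
  comul_star : ∀ (x : B) (n : ℕ) (u v : Fin n → B),
    comul (R := R) x = ∑ i, u i ⊗ₜ[R] v i →
      comul (R := R) (star x) = ∑ i, star (u i) ⊗ₜ[R] star (v i)
  counit_star : ∀ x : B, counit (R := R) (star x) = star (counit (R := R) x)

namespace IsHopfStarAlgebra

theorem comul_star_eq_sum (h : IsHopfStarAlgebra R B) {x : B} {ι : Type*} (r : Repr R x ι) :
    comul (R := R) (star x) = ∑ i ∈ r.index, star (r.left i) ⊗ₜ[R] star (r.right i) := by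
  have reindex : ∀ f : ι → B ⊗[R] B,
      ∑ i, f (r.index.equivFin.symm i) = ∑ i ∈ r.index, f i := fun f =>
    (r.index.equivFin.symm.sum_comp fun i => f i).trans (r.index.sum_coe_sort f)
  exact (h.comul_star x _ _ _ (r.eq.symm.trans (reindex _).symm)).trans
    (reindex fun i => star (r.left i) ⊗ₜ[R] star (r.right i))

def reprStar (h : IsHopfStarAlgebra R B) {x : B} {ι : Type*} (r : Repr R x ι) :
    Repr R (star x) ι where
  index := r.index
  left i := star (r.left i)
  right i := star (r.right i)
  eq := (h.comul_star_eq_sum r).symm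

end IsHopfStarAlgebra

variable [StarModule R B]

variable (R) in
def starAntipodeStar : B →ₗ[R] B where
  toFun x := star (antipode R (star x))
  map_add' x y := by simp only [star_add, map_add]
  map_smul' c x := by simp only [star_smul, map_smul, star_star, RingHom.id_apply]

namespace IsHopfStarAlgebra

theorem sum_starAntipodeStar_mul (h : IsHopfStarAlgebra R B) {x : B} {ι : Type*}
    (r : Repr R x ι) :
    ∑ i ∈ r.index, starAntipodeStar R (r.right i) * r.left i = algebraMap R B (counit x) := by
  have := congrArg star (sum_mul_antipode_eq_algebraMap_counit (h.reprStar r))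
  simpa [star_sum, star_mul, h.counit_star, starAntipodeStar, reprStar] using this

theorem antipode_mul_antipode_comp_starAntipodeStar (h : IsHopfStarAlgebra R B) :
    toConv (antipode R (A := B)) * toConv (antipode R ∘ₗ starAntipodeStar R) = 1 := by
  ext x
  rw [(ℛ R x).convMul_apply, LinearMap.convOne_apply]
  simp only [LinearMap.comp_apply, ← antipode_mul_antidistrib, ← map_sum,
    h.sum_starAntipodeStar_mul]
  rw [Algebra.algebraMap_eq_smul_one, map_smul, antipode_one]

theorem antipode_comp_starAntipodeStar (h : IsHopfStarAlgebra R B) :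
    antipode R ∘ₗ starAntipodeStar R = LinearMap.id (M := B) :=
  congrArg ofConv (left_inv_eq_right_inv LinearMap.id_mul_antipode
    h.antipode_mul_antipode_comp_starAntipodeStar).symm

theorem antipode_star_antipode (h : IsHopfStarAlgebra R B) (x : B) :
    antipode R (star (antipode R x)) = star x := by
  simpa [starAntipodeStar] using LinearMap.congr_fun h.antipode_comp_starAntipodeStar (star x)

end IsHopfStarAlgebra

end HopfStar

section Pairing

variable {V W : Type*} [Ring V] [Ring W] [HopfAlgebra ℂ V] [HopfAlgebra ℂ W]

theorem actM_tmul_eq_sum (p : V →ₗ[ℂ] Module.Dual ℂ W) (x : V) {φ : W} {ι : Type*}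
    (r : Repr ℂ φ ι) : actM p (x ⊗ₜ φ) = ∑ i ∈ r.index, p x (r.right i) • r.left i := by
  simp [actM, ← r.eq, tmul_sum]

theorem actM_tmul_star [StarRing V] [StarRing W] [StarModule ℂ W]
    (p : V →ₗ[ℂ] Module.Dual ℂ W) (hW : IsHopfStarAlgebra ℂ W)
    (hantipode : ∀ (a : V) (φ : W),
      p (HopfAlgebra.antipode (R := ℂ) a) φ = p a (HopfAlgebra.antipode (R := ℂ) φ))
    (hpstar : ∀ (a : V) (φ : W),
      p (star a) φ = starRingEnd ℂ (p a (star (HopfAlgebra.antipode (R := ℂ) φ))))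
    (x : V) (φ : W) : actM p (x ⊗ₜ star φ) = star (actM p (star (antipode ℂ x) ⊗ₜ φ)) := by
  have pair_star : ∀ ψ : W, p x (star ψ) = starRingEnd ℂ (p (star (antipode ℂ x)) ψ) := by
    intro ψ
    rw [hpstar, hantipode, hW.antipode_star_antipode, Complex.conj_conj]
  rw [actM_tmul_eq_sum p _ (hW.reprStar (ℛ ℂ φ)), actM_tmul_eq_sum p _ (ℛ ℂ φ), star_sum]
  refine Finset.sum_congr rfl fun i _ => ?_
  simp only [IsHopfStarAlgebra.reprStar, pair_star, star_smul]
  rfl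

end Pairing

theorem invariants_star_closed_general (p : U →ₗ[ℂ] Module.Dual ℂ A)
    (hAcomul : ∀ (φ : A) (n : ℕ) (u v : Fin n → A),
      Coalgebra.comul (R := ℂ) φ = ∑ i, u i ⊗ₜ[ℂ] v i →
      Coalgebra.comul (R := ℂ) (star φ) = ∑ i, star (u i) ⊗ₜ[ℂ] star (v i))
    (hAcounit : ∀ φ : A,
      Coalgebra.counit (R := ℂ) (star φ) = starRingEnd ℂ (Coalgebra.counit (R := ℂ) φ))
    (hantipode : ∀ (a : U) (φ : A),
      p (HopfAlgebra.antipode (R := ℂ) a) φ = p a (HopfAlgebra.antipode (R := ℂ) φ))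
    (hpstar : ∀ (a : U) (φ : A),
      p (star a) φ = starRingEnd ℂ (p a (star (HopfAlgebra.antipode (R := ℂ) φ))))
    (J : Submodule ℂ U)
    (hJstar : ∀ x ∈ J, star (HopfAlgebra.antipode (R := ℂ) x) ∈ J) :
    ∀ φ : A, (∀ x ∈ J, actM p (x ⊗ₜ φ) = 0) → ∀ x ∈ J, actM p (x ⊗ₜ star φ) = 0 := by
  intro φ hφ x hx
  rw [actM_tmul_star p ⟨hAcomul, hAcounit⟩ hantipode hpstar, hφ _ (hJstar x hx), star_zero]

/-- for a duality pairing of Hopf ∗-algebras and a left ideal `𝒥 ⊆ U` with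
`S(𝒥)^∗ ⊆ 𝒥`, the invariant subspace `A^𝒥` is closed under the ∗-operation.

The Hopf ∗-algebra compatibilities `Δ(x^∗) = (∗⊗∗)(Δ(x))` and `ε(x^∗) = conj (ε x)` are
stated in Sweedler form (the former quantified over all finite-sum representations of
`Δ(x)`); the conjugate-linear antiautomorphism properties of `∗` are part of the
`StarRing`/`StarModule` assumptions. -/
theorem invariants_star_closed (p : U →ₗ[ℂ] Module.Dual ℂ A)
    (hUcomul : ∀ (x : U) (n : ℕ) (u v : Fin n → U),
      Coalgebra.comul (R := ℂ) x = ∑ i, u i ⊗ₜ[ℂ] v i →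
      Coalgebra.comul (R := ℂ) (star x) = ∑ i, star (u i) ⊗ₜ[ℂ] star (v i))
    (hUcounit : ∀ x : U,
      Coalgebra.counit (R := ℂ) (star x) = starRingEnd ℂ (Coalgebra.counit (R := ℂ) x))
    (hAcomul : ∀ (φ : A) (n : ℕ) (u v : Fin n → A),
      Coalgebra.comul (R := ℂ) φ = ∑ i, u i ⊗ₜ[ℂ] v i →
      Coalgebra.comul (R := ℂ) (star φ) = ∑ i, star (u i) ⊗ₜ[ℂ] star (v i))
    (hAcounit : ∀ φ : A,
      Coalgebra.counit (R := ℂ) (star φ) = starRingEnd ℂ (Coalgebra.counit (R := ℂ) φ))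
    (hmulU : ∀ (a b : U) (φ : A),
      p (a * b) φ = pairTensor p (a ⊗ₜ b) (Coalgebra.comul (R := ℂ) φ))
    (honeU : ∀ φ : A, p 1 φ = Coalgebra.counit (R := ℂ) φ)
    (hmulA : ∀ (a : U) (φ ψ : A),
      p a (φ * ψ) = pairTensor p (Coalgebra.comul (R := ℂ) a) (φ ⊗ₜ ψ))
    (honeA : ∀ a : U, p a 1 = Coalgebra.counit (R := ℂ) a)
    (hantipode : ∀ (a : U) (φ : A),
      p (HopfAlgebra.antipode (R := ℂ) a) φ = p a (HopfAlgebra.antipode (R := ℂ) φ))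
    (hpstar : ∀ (a : U) (φ : A),
      p (star a) φ = starRingEnd ℂ (p a (star (HopfAlgebra.antipode (R := ℂ) φ))))
    (J : Submodule ℂ U) (hJ : ∀ u : U, ∀ x ∈ J, u * x ∈ J)
    (hJstar : ∀ x ∈ J, star (HopfAlgebra.antipode (R := ℂ) x) ∈ J) :
    ∀ φ : A, (∀ x ∈ J, actM p (x ⊗ₜ φ) = 0) → ∀ x ∈ J, actM p (x ⊗ₜ star φ) = 0 :=
  invariants_star_closed_general p hAcomul hAcounit hantipode hpstar J hJstar
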